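/- Suppose β_{ij} (i ≠ j, β_{ij} = β_{ji}) are smooth functions on ℝⁿ satisfying the Darboux–Egoroff system ∂_k β_{ij} = β_{ik}β_{kj} (i,j,k pairwise distinct) and Σ_s ∂_s β_{ij} = 0. Fix l ∈ {1,…,n} and define p_i for i = 1,…,n by the system ∂_k p_i = -Σ_s β_{is}² if i = k and ∂_k p_i = β_{ik}² if i ≠ k. Then this system for p_i is compatible: for all i, k, m, ∂_m(RHS of ∂_k p_i) = ∂_k(RHS of ∂_m p_i). -/

import Mathlib

/-- Partial derivative in the `k`-th coordinate direction. -/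
noncomputable def pd {n : ℕ} (k : Fin n) (f : (Fin n → ℝ) → ℝ) (x : Fin n → ℝ) : ℝ :=
  fderiv ℝ f x (Pi.single k 1)

/-- Right-hand side of the potential system `∂_k p_i = G i k`:
`G i i = -Σ_s β_{is}²` and `G i k = β_{ik}²` for `k ≠ i`. -/
noncomputable def potRHS {n : ℕ} (β : Fin n → Fin n → (Fin n → ℝ) → ℝ)
    (i k : Fin n) (x : Fin n → ℝ) : ℝ :=
  if i = k then -∑ s : Fin n, (β i s x) ^ 2 else (β i k x) ^ 2

lemma pd_sq {n : ℕ} (f : (Fin n → ℝ) → ℝ) (hf : Differentiable ℝ f) (k : Fin n)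
    (x : Fin n → ℝ) : pd k (fun y => f y ^ 2) x = 2 * f x * pd k f x := by
  unfold pd
  have h : (fun y => f y ^ 2) = fun y => f y * f y := by funext y; ring
  rw [h, fderiv_fun_mul (hf x) (hf x)]
  simp
  ring

lemma pd_sum {n : ℕ} (f : Fin n → (Fin n → ℝ) → ℝ) (hf : ∀ s, Differentiable ℝ (f s))
    (k : Fin n) (x : Fin n → ℝ) :
    pd k (fun y => ∑ s : Fin n, f s y) x = ∑ s : Fin n, pd k (f s) x := by
  unfold pd
  rw [fderiv_fun_sum (fun s _ => (hf s x))]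
  simp

lemma pd_neg {n : ℕ} (f : (Fin n → ℝ) → ℝ) (k : Fin n) (x : Fin n → ℝ) :
    pd k (fun y => -f y) x = -pd k f x := by
  unfold pd
  rw [fderiv_fun_neg]
  simp

lemma key_lemma {n : ℕ} (β : Fin n → Fin n → (Fin n → ℝ) → ℝ)
    (hdiag : ∀ i, β i i = 0)
    (hDE : ∀ i j k, i ≠ j → j ≠ k → i ≠ k →
      ∀ x, pd k (β i j) x = β i k x * β k j x)
    (hsum : ∀ i j, i ≠ j → ∀ x, ∑ s : Fin n, pd s (β i j) x = 0)
    (i m : Fin n) (him : i ≠ m) (x : Fin n → ℝ) :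
    pd i (β i m) x + pd m (β i m) x = -∑ s : Fin n, β i s x * β s m x := by
  have h0 := hsum i m him x
  have hterm : ∀ s : Fin n, pd s (β i m) x =
      β i s x * β s m x + (if s = i then pd i (β i m) x else 0)
        + (if s = m then pd m (β i m) x else 0) := by
    intro s
    by_cases hsi : s = i
    · subst hsi
      have : s ≠ m := him
      simp [hdiag s, this]
    · by_cases hsm : s = m
      · subst hsm
        simp [hdiag s, hsi]
      · simp only [hsi, hsm, if_neg, if_false, add_zero]
        exact hDE i m s him (fun h => hsm h.symm) (fun h => hsi h.symm) x
  rw [Finset.sum_congr rfl (fun s _ => hterm s)] at h0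
  simp only [Finset.sum_add_distrib, Finset.sum_ite_eq', Finset.mem_univ, if_true] at h0
  linarith

lemma case3 {n : ℕ} (β : Fin n → Fin n → (Fin n → ℝ) → ℝ)
    (hsmooth : ∀ i j, ContDiff ℝ (⊤ : ℕ∞) (β i j))
    (hsym : ∀ i j, β i j = β j i)
    (hdiag : ∀ i, β i i = 0)
    (hDE : ∀ i j k, i ≠ j → j ≠ k → i ≠ k →
      ∀ x, pd k (β i j) x = β i k x * β k j x)
    (hsum : ∀ i j, i ≠ j → ∀ x, ∑ s : Fin n, pd s (β i j) x = 0)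
    (i m : Fin n) (him : i ≠ m) (x : Fin n → ℝ) :
    pd m (potRHS β i i) x = pd i (potRHS β i m) x := by
  have hdiff : ∀ a b, Differentiable ℝ (β a b) := fun a b => (hsmooth a b).differentiable (by simp)
  have hL : potRHS β i i = fun y => -∑ s : Fin n, (β i s y) ^ 2 := by
    funext y; simp [potRHS]
  have hR : potRHS β i m = fun y => (β i m y) ^ 2 := by
    funext y; simp [potRHS, him]
  rw [hL, hR, pd_sq (β i m) (hdiff i m) i x]
  rw [show (fun y => -∑ s : Fin n, (β i s y) ^ 2) = (fun y => -(fun z => ∑ s : Fin n, (β i s z) ^ 2) y) from rfl,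
    pd_neg, pd_sum (fun s => fun y => (β i s y) ^ 2) (fun s => (hdiff i s).pow 2) m x]
  have hsq : ∀ s : Fin n, pd m (fun y => (β i s y) ^ 2) x = 2 * β i s x * pd m (β i s) x :=
    fun s => pd_sq (β i s) (hdiff i s) m x
  rw [Finset.sum_congr rfl (fun s _ => hsq s)]
  have hterm : ∀ s : Fin n, 2 * β i s x * pd m (β i s) x =
      2 * β i m x * (β i s x * β s m x) + (if s = m then 2 * β i m x * pd m (β i m) x else 0) := by
    intro s
    by_cases hsm : s = m
    · subst hsm
      simp [hdiag s]
    · by_cases hsi : s = i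
      · subst hsi
        simp [hdiag s, hsm]
      · have hde := hDE i s m (fun h => hsi h.symm) (fun h => hsm h) him x
        have hs : β m s = β s m := hsym m s
        simp only [hsm, if_neg, if_false, add_zero, hde]
        rw [congrFun hs x]
        ring
  rw [Finset.sum_congr rfl (fun s _ => hterm s)]
  simp only [Finset.sum_add_distrib, Finset.sum_ite_eq', Finset.mem_univ, if_true,
    ← Finset.mul_sum]
  have hk := key_lemma β hdiag hDE hsum i m him x
  have : ∑ s : Fin n, β i s x * β s m x = -(pd i (β i m) x + pd m (β i m) x) := by linarith
  rw [this]
  ring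

theorem stmt_18 {n : ℕ} (β : Fin n → Fin n → (Fin n → ℝ) → ℝ)
    (hsmooth : ∀ i j, ContDiff ℝ (⊤ : ℕ∞) (β i j))
    (hsym : ∀ i j, β i j = β j i)
    (hdiag : ∀ i, β i i = 0)
    (hDE : ∀ i j k, i ≠ j → j ≠ k → i ≠ k →
      ∀ x, pd k (β i j) x = β i k x * β k j x)
    (hsum : ∀ i j, i ≠ j → ∀ x, ∑ s : Fin n, pd s (β i j) x = 0) :
    ∀ (i k m : Fin n) (x : Fin n → ℝ),
      pd m (potRHS β i k) x = pd k (potRHS β i m) x := by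
  intro i k m x
  have hdiff : ∀ a b, Differentiable ℝ (β a b) := fun a b => (hsmooth a b).differentiable (by simp)
  by_cases hkm : k = m
  · subst hkm; rfl
  by_cases hik : i = k
  · subst hik
    exact case3 β hsmooth hsym hdiag hDE hsum i m (fun h => hkm h) x
  by_cases him : i = m
  · subst him
    exact (case3 β hsmooth hsym hdiag hDE hsum i k (fun h => hkm h.symm) x).symm
  · -- i, k, m pairwise distinct
    have hRk : potRHS β i k = fun y => (β i k y) ^ 2 := by funext y; simp [potRHS, hik]
    have hRm : potRHS β i m = fun y => (β i m y) ^ 2 := by funext y; simp [potRHS, him]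
    rw [hRk, hRm, pd_sq (β i k) (hdiff i k) m x, pd_sq (β i m) (hdiff i m) k x]
    rw [hDE i k m hik (fun h => hkm h) him x, hDE i m k him (fun h => hkm h.symm) hik x]
    rw [congrFun (hsym m k) x]
    ring
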